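/- Let P ⊆ ℝ^d be a full-dimensional lattice polytope whose codegree a equals 1 (i.e. int(P) ∩ ℤ^d ≠ ∅) and which satisfies P = ⌊P⌋ + {P}. Then the remainder polytope {P} is a reflexive polytope. -/

import Mathlib

open Set Pointwise

/-- The set of lattice points of `ℝ^d`. -/
def latticePoints (d : ℕ) : Set (Fin d → ℝ) :=
  {x | ∀ i, ∃ z : ℤ, x i = (z : ℝ)}

/-- A lattice polytope: the convex hull of a finite set of lattice points. -/
def IsLatticePolytope {d : ℕ} (P : Set (Fin d → ℝ)) : Prop :=
  ∃ V : Finset (Fin d → ℝ), (V : Set (Fin d → ℝ)) ⊆ latticePoints d ∧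
    P = convexHull ℝ (V : Set (Fin d → ℝ))

/-- The natural pairing of an integral linear functional with a point of `ℝ^d`. -/
def pairing {d : ℕ} (n : Fin d → ℤ) (x : Fin d → ℝ) : ℝ :=
  ∑ i, (n i : ℝ) * x i

/-- `P = {x | n_F(x) ≥ -h_F}` is an irredundant presentation with primitive
integral inner normals, i.e. the facet presentation of `P`. -/
def IsFacetPresentation {d m : ℕ} (P : Set (Fin d → ℝ))
    (n : Fin m → Fin d → ℤ) (h : Fin m → ℤ) : Prop :=
  P = {x | ∀ i, pairing (n i) x ≥ -(h i : ℝ)} ∧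
  (∀ i, Finset.univ.gcd (n i) = 1) ∧
  (∀ i, ∃ x : Fin d → ℝ, pairing (n i) x < -(h i : ℝ) ∧
    ∀ j, j ≠ i → pairing (n j) x ≥ -(h j : ℝ))

/-- `a` is the codegree of `P`: the least `k ≥ 1` such that `int(kP)` contains
a lattice point. -/
def IsCodegree {d : ℕ} (P : Set (Fin d → ℝ)) (a : ℕ) : Prop :=
  1 ≤ a ∧ (interior ((a : ℝ) • P) ∩ latticePoints d).Nonempty ∧
    ∀ k : ℕ, 1 ≤ k → (interior ((k : ℝ) • P) ∩ latticePoints d).Nonempty → a ≤ k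

/-- The floor polytope `⌊R⌋ = conv(int(R) ∩ ℤ^d)`. -/
def floorPoly {d : ℕ} (R : Set (Fin d → ℝ)) : Set (Fin d → ℝ) :=
  convexHull ℝ (interior R ∩ latticePoints d)

/-- The remainder polytope `{P} = conv{x ∈ ℤ^d | n_F(x) ≥ (a-1)h_F - 1}`,
defined in terms of the facet presentation data and the codegree `a`. -/
def remPoly {d m : ℕ} (n : Fin m → Fin d → ℤ) (h : Fin m → ℤ) (a : ℕ) :
    Set (Fin d → ℝ) :=
  convexHull ℝ {x | x ∈ latticePoints d ∧
    ∀ i, pairing (n i) x ≥ ((a : ℝ) - 1) * (h i : ℝ) - 1}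

/-- The cone `C_P ⊆ ℝ^d × ℝ` over `P`, in terms of the facet presentation. -/
def coneOver {d m : ℕ} (n : Fin m → Fin d → ℤ) (h : Fin m → ℤ) :
    Set ((Fin d → ℝ) × ℝ) :=
  {p | ∀ i, pairing (n i) p.1 ≥ -(p.2 * (h i : ℝ))}

/-- The interior `int(C_P)` of the cone over `P`. -/
def intCone {d m : ℕ} (n : Fin m → Fin d → ℤ) (h : Fin m → ℤ) :
    Set ((Fin d → ℝ) × ℝ) :=
  {p | ∀ i, pairing (n i) p.1 > -(p.2 * (h i : ℝ))}

/-- The anticanonical set `ant(C_P)` of the cone over `P`. -/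
def antCone {d m : ℕ} (n : Fin m → Fin d → ℤ) (h : Fin m → ℤ) :
    Set ((Fin d → ℝ) × ℝ) :=
  {p | ∀ i, pairing (n i) p.1 ≥ -(p.2 * (h i : ℝ)) - 1}

/-- Lattice points of `ℝ^d × ℝ = ℝ^{d+1}`. -/
def latticePairs (d : ℕ) : Set ((Fin d → ℝ) × ℝ) :=
  {p | p.1 ∈ latticePoints d ∧ ∃ z : ℤ, p.2 = (z : ℝ)}

/-- The nearly Gorenstein condition with respect to a given facet presentation:
`(C_P ∩ ℤ^{d+1}) \ {0} ⊆ (int(C_P) ∩ ℤ^{d+1}) + (ant(C_P) ∩ ℤ^{d+1})`. -/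
def NGIncl {d m : ℕ} (n : Fin m → Fin d → ℤ) (h : Fin m → ℤ) : Prop :=
  (coneOver n h ∩ latticePairs d) \ {(0 : (Fin d → ℝ) × ℝ)} ⊆
    (intCone n h ∩ latticePairs d) + (antCone n h ∩ latticePairs d)

/-- A full-dimensional lattice polytope is nearly Gorenstein if the nearly
Gorenstein inclusion holds for its facet presentation. -/
def NearlyGorenstein {d : ℕ} (P : Set (Fin d → ℝ)) : Prop :=
  ∃ (m : ℕ) (n : Fin m → Fin d → ℤ) (h : Fin m → ℤ),
    IsFacetPresentation P n h ∧ NGIncl n h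

/-- The polar dual `Q* = {y | y(x) ≥ -1 for all x ∈ Q}`. -/
def polarDual {d : ℕ} (Q : Set (Fin d → ℝ)) : Set (Fin d → ℝ) :=
  {y | ∀ x ∈ Q, (∑ i, y i * x i) ≥ -1}

/-- A reflexive polytope: a lattice polytope with `0` in its interior whose
polar dual is again a lattice polytope. -/
def IsReflexive {d : ℕ} (Q : Set (Fin d → ℝ)) : Prop :=
  IsLatticePolytope Q ∧ (0 : Fin d → ℝ) ∈ interior Q ∧
    IsLatticePolytope (polarDual Q)

/-- A Gorenstein polytope: some dilate `kP`, translated by a lattice vector,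
is reflexive. -/
def IsGorenstein {d : ℕ} (P : Set (Fin d → ℝ)) : Prop :=
  ∃ (k : ℕ) (w : Fin d → ℝ), 1 ≤ k ∧ w ∈ latticePoints d ∧
    IsReflexive ((fun x => x - w) '' ((k : ℝ) • P))

/-- The integer decomposition property. -/
def IsIDP {d : ℕ} (P : Set (Fin d → ℝ)) : Prop :=
  ∀ k : ℕ, 1 ≤ k → ∀ x ∈ ((k : ℝ) • P) ∩ latticePoints d,
    ∃ y : Fin k → Fin d → ℝ, (∀ j, y j ∈ P ∩ latticePoints d) ∧ x = ∑ j, y j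

/-- Minkowski indecomposability of a lattice polytope. -/
def IsIndecomposable {d : ℕ} (P : Set (Fin d → ℝ)) : Prop :=
  (¬ ∃ p : Fin d → ℝ, P = {p}) ∧
  ∀ P₁ P₂ : Set (Fin d → ℝ), IsLatticePolytope P₁ → IsLatticePolytope P₂ →
    P = P₁ + P₂ → (∃ p, P₁ = {p}) ∨ (∃ p, P₂ = {p})

/-- A `(0,1)`-polytope: the convex hull of a set of `(0,1)`-vectors. -/
def Is01Polytope {d : ℕ} (P : Set (Fin d → ℝ)) : Prop :=
  ∃ V : Finset (Fin d → ℝ), (∀ v ∈ V, ∀ i, v i = 0 ∨ v i = 1) ∧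
    P = convexHull ℝ (V : Set (Fin d → ℝ))

/-!
Since `a = 1`, the remainder polytope is `conv` of the lattice points of `Q = {x | n_F(x) ≥ -1}`.
Lattice points of `int P` satisfy `n_F ≥ -h_F + 1`, so `⌊P⌋ + Q ⊆ P = ⌊P⌋ + {P}`. Cancelling the
compact convex summand `⌊P⌋` (by separating a point of `Q \ {P}` from `{P}` and maximising the
separating functional over `⌊P⌋`) gives `Q ⊆ {P}`, hence `{P} = Q`. A polytope of the form
`{x | n_F(x) ≥ -1}` with integral `n_F` contains `0` in its interior and has polar dual
`conv({0} ∪ {n_F})`, so it is reflexive.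
-/

open Bornology

section Lattice

variable {d : ℕ}

theorem Bornology.IsBounded.finite_inter_latticePoints {s : Set (Fin d → ℝ)}
    (hs : IsBounded s) : (s ∩ latticePoints d).Finite := by
  refine (ZSpan.setFinite_inter (Pi.basisFun ℝ (Fin d)) hs).subset
    (inter_subset_inter_right _ fun x hx => ?_)
  refine ((Pi.basisFun ℝ (Fin d)).mem_span_iff_repr_mem ℤ x).2 fun i => ?_
  obtain ⟨z, hz⟩ := hx i
  exact ⟨z, by simp [hz]⟩

theorem isLatticePolytope_convexHull {S : Set (Fin d → ℝ)} (hS : S ⊆ latticePoints d)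
    (hb : IsBounded S) : IsLatticePolytope (convexHull ℝ S) := by
  have hfin : S.Finite := by
    simpa [inter_eq_left.2 hS] using hb.finite_inter_latticePoints
  exact ⟨hfin.toFinset, by simpa using hS, by simp⟩

theorem IsLatticePolytope.isCompact {P : Set (Fin d → ℝ)} (hP : IsLatticePolytope P) :
    IsCompact P := by
  obtain ⟨V, -, rfl⟩ := hP
  exact V.finite_toSet.isCompact_convexHull (𝕜 := ℝ)

end Lattice

section Pairing

variable {d : ℕ}

def pairingCLM (v : Fin d → ℤ) : StrongDual ℝ (Fin d → ℝ) :=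
  ∑ i, (v i : ℝ) • ContinuousLinearMap.proj i

@[simp]
theorem coe_pairingCLM (v : Fin d → ℤ) : ⇑(pairingCLM v) = pairing v := by
  ext x
  simp [pairingCLM, pairing]

theorem continuous_pairing (v : Fin d → ℤ) : Continuous (pairing v) :=
  coe_pairingCLM v ▸ (pairingCLM v).continuous

theorem convex_setOf_le_pairing (v : Fin d → ℤ) (c : ℝ) :
    Convex ℝ {x | c ≤ pairing v x} :=
  convex_halfSpace_ge (coe_pairingCLM v ▸ (pairingCLM v).toLinearMap.isLinear) c

theorem pairing_eq_intCast {v : Fin d → ℤ} {x : Fin d → ℝ} (hx : x ∈ latticePoints d) :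
    ∃ z : ℤ, pairing v x = z := by
  choose z hz using hx
  exact ⟨∑ i, v i * z i, by simp [pairing, hz]⟩

theorem ne_zero_of_gcd_eq_one {v : Fin d → ℤ} (hv : Finset.univ.gcd v = 1) : v ≠ 0 := by
  rintro rfl
  exact one_ne_zero (hv.symm.trans (Finset.gcd_eq_zero_iff.2 fun _ _ => rfl))

theorem pairingCLM_ne_zero {v : Fin d → ℤ} (hv : v ≠ 0) : pairingCLM v ≠ 0 := by
  obtain ⟨j, hj⟩ := Function.ne_iff.1 hv
  refine DFunLike.ne_iff.2 ⟨Pi.single j 1, ?_⟩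
  simpa [pairing, Pi.single_apply] using hj

theorem interior_setOf_le_pairing {v : Fin d → ℤ} (hv : v ≠ 0) (c : ℝ) :
    interior {x | c ≤ pairing v x} = {x | c < pairing v x} := by
  have := ((pairingCLM v).isOpenMap_of_ne_zero
    (pairingCLM_ne_zero hv)).preimage_interior_eq_interior_preimage (pairingCLM v).continuous (Ici c)
  rw [coe_pairingCLM, interior_Ici] at this
  exact this.symm

theorem int_add_one_le_pairing_of_mem_interior {P : Set (Fin d → ℝ)} {v : Fin d → ℤ} {z : ℤ}
    (hv : v ≠ 0) (hP : P ⊆ {x | (z : ℝ) ≤ pairing v x}) {u : Fin d → ℝ}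
    (hu : u ∈ interior P) (hul : u ∈ latticePoints d) : (z : ℝ) + 1 ≤ pairing v u := by
  have hlt : (z : ℝ) < pairing v u := by
    simpa [interior_setOf_le_pairing hv] using interior_mono hP hu
  obtain ⟨k, hk⟩ := pairing_eq_intCast (v := v) hul
  rw [hk] at hlt ⊢
  exact_mod_cast Int.add_one_le_iff.2 (Int.cast_lt.1 hlt)

end Pairing

theorem subset_of_add_subset_add {E : Type*} [AddCommGroup E] [Module ℝ E] [TopologicalSpace E]
    [IsTopologicalAddGroup E] [ContinuousSMul ℝ E] [LocallyConvexSpace ℝ E] {F A B : Set E}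
    (hF : IsCompact F) (hFne : F.Nonempty) (hB : Convex ℝ B) (hBc : IsClosed B)
    (h : F + A ⊆ F + B) : A ⊆ B := by
  intro x hx
  by_contra hxB
  obtain ⟨f, c, hfB, hfx⟩ := geometric_hahn_banach_closed_point hB hBc hxB
  obtain ⟨y, hyF, hymax⟩ := hF.exists_isMaxOn hFne f.continuous.continuousOn
  obtain ⟨y', hy', b, hb, hsum : y' + b = y + x⟩ := h (add_mem_add hyF hx)
  have hf : f y' + f b = f y + f x := by rw [← map_add, ← map_add, hsum]
  linarith [isMaxOn_iff.1 hymax y' hy', hfB b hb]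

theorem polarDual_setOf_neg_one_le {d : ℕ} {ι : Type*} [Finite ι] (v : ι → Fin d → ℝ) :
    polarDual {x | ∀ i, ∑ j, v i j * x j ≥ -1} = convexHull ℝ (insert 0 (range v)) := by
  set K := convexHull ℝ (insert 0 (range v))
  refine subset_antisymm (fun y hy => ?_) (convexHull_min ?_ ?_)
  · by_contra hyK
    have hKc : IsClosed K := ((finite_range v).insert 0).isClosed_convexHull (𝕜 := ℝ)
    obtain ⟨f, c, hfK, hfy⟩ := geometric_hahn_banach_closed_point (convex_convexHull ℝ _) hKc hyK
    have hc : 0 < c := by simpa using hfK 0 (subset_convexHull ℝ _ (mem_insert 0 _))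
    -- `x = -c⁻¹ • g`, where `f = ⟨·, g⟩`, lies in the set but pairs with `y` to less than `-1`.
    set g : Fin d → ℝ := fun j => f fun k => if j = k then 1 else 0
    have hfg : ∀ z, f z = ∑ j, z j * g j := LinearMap.pi_apply_eq_sum_univ f.toLinearMap
    have hscale : ∀ z, ∑ j, z j * (-c⁻¹ • g) j = -c⁻¹ * f z := fun z => by
      simp only [hfg, Pi.smul_apply, smul_eq_mul, Finset.mul_sum]
      exact Finset.sum_congr rfl fun j _ => by ring
    have hx : -c⁻¹ • g ∈ {x | ∀ i, ∑ j, v i j * x j ≥ -1} := fun i => by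
      have := hfK (v i) (subset_convexHull ℝ _ (mem_insert_of_mem 0 (mem_range_self i)))
      rw [hscale, ge_iff_le, neg_mul, neg_le_neg_iff, inv_mul_le_one₀ hc]
      exact this.le
    have := hy _ hx
    rw [hscale, ge_iff_le, neg_mul, neg_le_neg_iff, inv_mul_le_one₀ hc] at this
    linarith
  · rintro _ (rfl | ⟨i, rfl⟩) x hx
    · simp
    · exact hx i
  · simp only [polarDual, ofPred_forall]
    refine convex_iInter₂ fun x _ => convex_halfSpace_ge ⟨fun y z => ?_, fun a y => ?_⟩ _
    · simp [add_mul, Finset.sum_add_distrib]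
    · simp [Finset.mul_sum, mul_assoc]

section Remainder

variable {d m : ℕ} (n : Fin m → Fin d → ℤ) (h : Fin m → ℤ)

theorem remPoly_one :
    remPoly n h 1 = convexHull ℝ ({x | ∀ i, pairing (n i) x ≥ -1} ∩ latticePoints d) := by
  simp only [remPoly, Nat.cast_one, sub_self, zero_mul, zero_sub]
  congr 1
  ext x
  exact and_comm

theorem convex_setOf_forall_le_pairing (c : Fin m → ℝ) :
    Convex ℝ {x | ∀ i, pairing (n i) x ≥ c i} := by
  simpa only [ofPred_forall] using convex_iInter fun i => convex_setOf_le_pairing (n i) (c i)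

variable {n h}

theorem floorPoly_subset_setOf_add_one_le_pairing {P : Set (Fin d → ℝ)}
    (hPeq : P = {x | ∀ i, pairing (n i) x ≥ -(h i : ℝ)}) (hn : ∀ i, n i ≠ 0) :
    floorPoly P ⊆ {x | ∀ i, pairing (n i) x ≥ -(h i : ℝ) + 1} := by
  refine convexHull_min (fun u ⟨hu, hul⟩ i => ?_) (convex_setOf_forall_le_pairing n _)
  have hPi : P ⊆ {x | ((-h i : ℤ) : ℝ) ≤ pairing (n i) x} :=
    hPeq.subset.trans fun x hx => by simpa using hx i
  simpa using int_add_one_le_pairing_of_mem_interior (hn i) hPi hu hul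

theorem floorPoly_add_subset {P : Set (Fin d → ℝ)}
    (hPeq : P = {x | ∀ i, pairing (n i) x ≥ -(h i : ℝ)}) (hn : ∀ i, n i ≠ 0) :
    floorPoly P + {x | ∀ i, pairing (n i) x ≥ -1} ⊆ P := by
  rintro _ ⟨u, hu, x, hx, rfl⟩
  rw [hPeq]
  intro i
  have := floorPoly_subset_setOf_add_one_le_pairing hPeq hn hu i
  simp only [pairing, Pi.add_apply, mul_add, Finset.sum_add_distrib] at this hx ⊢
  linarith [hx i]

theorem isReflexive_of_eq_setOf_neg_one_le {Q : Set (Fin d → ℝ)} (hQ : IsLatticePolytope Q)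
    (hQn : Q = {x | ∀ i, pairing (n i) x ≥ -1}) : IsReflexive Q := by
  subst hQn
  refine ⟨hQ, ?_, ?_⟩
  · refine mem_interior_iff_mem_nhds.2 (Filter.eventually_all.2 fun i => ?_)
    refine ((continuous_pairing (n i)).tendsto 0).eventually_const_le ?_
    simp [pairing]
  · rw [show {x | ∀ i, pairing (n i) x ≥ -1} = {x | ∀ i, ∑ j, (n i j : ℝ) * x j ≥ -1} from rfl,
      polarDual_setOf_neg_one_le]
    refine isLatticePolytope_convexHull ?_ ((finite_range _).insert 0).isBounded
    rintro _ (rfl | ⟨i, rfl⟩) j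
    exacts [⟨0, by simp⟩, ⟨n i j, rfl⟩]

end Remainder

theorem stmt_8_general {d : ℕ} (P : Set (Fin d → ℝ))
    (hP : IsLatticePolytope P)
    {m : ℕ} (n : Fin m → Fin d → ℤ) (h : Fin m → ℤ)
    (hpres : IsFacetPresentation P n h)
    (ha : IsCodegree P 1)
    (hdecomp : P = floorPoly P + remPoly n h 1) :
    IsReflexive (remPoly n h 1) := by
  obtain ⟨hPeq, hgcd, -⟩ := hpres
  have hn : ∀ i, n i ≠ 0 := fun i => ne_zero_of_gcd_eq_one (hgcd i)
  set Q := {x : Fin d → ℝ | ∀ i, pairing (n i) x ≥ -1}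
  have hPbdd : IsBounded P := hP.isCompact.isBounded
  obtain ⟨u₀, hu₀⟩ : (interior P ∩ latticePoints d).Nonempty := by simpa using ha.2.1
  have hF : IsCompact (floorPoly P) :=
    (hPbdd.subset interior_subset).finite_inter_latticePoints.isCompact_convexHull (𝕜 := ℝ)
  have hu₀F : u₀ ∈ floorPoly P := subset_convexHull ℝ _ hu₀
  have hFQ : floorPoly P + Q ⊆ P := floorPoly_add_subset hPeq hn
  have hQbdd : IsBounded Q := (isBounded_sub hPbdd hF.isBounded).subset fun x hx =>
    ⟨u₀ + x, hFQ (add_mem_add hu₀F hx), u₀, hu₀F, add_sub_cancel_left u₀ x⟩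
  have hQlat : IsLatticePolytope (remPoly n h 1) := by
    rw [remPoly_one]
    exact isLatticePolytope_convexHull inter_subset_right (hQbdd.subset inter_subset_left)
  have hrem : remPoly n h 1 = Q := by
    refine subset_antisymm ?_ ?_
    · rw [remPoly_one]
      exact convexHull_min inter_subset_left (convex_setOf_forall_le_pairing n _)
    · exact subset_of_add_subset_add hF ⟨u₀, hu₀F⟩ (convex_convexHull ℝ _)
        hQlat.isCompact.isClosed (hFQ.trans hdecomp.subset)
  exact isReflexive_of_eq_setOf_neg_one_le hQlat hrem

theorem stmt_8 {d : ℕ} (hd : 1 ≤ d) (P : Set (Fin d → ℝ))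
    (hP : IsLatticePolytope P) (hfull : (interior P).Nonempty)
    {m : ℕ} (n : Fin m → Fin d → ℤ) (h : Fin m → ℤ)
    (hpres : IsFacetPresentation P n h)
    (ha : IsCodegree P 1)
    (hdecomp : P = floorPoly P + remPoly n h 1) :
    IsReflexive (remPoly n h 1) :=
  stmt_8_general P hP n h hpres ha hdecomp
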